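/- arXiv:2104.13140 — 3 statements merged into one kernel-verified Lean document; each statement's English description precedes it below -/
import Mathlib

section
/- For every κ > 0 and every real β, the series ∑_{j=0}^∞ (Γ(j+1/2)/Γ(j+1)) · β^{2j} · (κ/2)^{−2j−1/2} · I_{2j+1/2}(κ) is summable (i.e., the infinite series defining the Kent normalizing constant converges). -/
open Real

/-- The modified Bessel function of the first kind `I_ν(x)`, defined by its power series. -/
noncomputable def besselI (ν x : ℝ) : ℝ :=
  ∑' k : ℕ, (1 / ((k.factorial : ℝ) * Real.Gamma ((k : ℝ) + ν + 1))) *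
    (x / 2) ^ (2 * (k : ℝ) + ν)

lemma gamma_factorial_le (ν : ℝ) (hν : 0 ≤ ν) :
    ∀ k : ℕ, (k.factorial : ℝ) * Real.Gamma (ν + 1) ≤ Real.Gamma ((k : ℝ) + ν + 1) := by
  intro k
  induction k with
  | zero => simp
  | succ k ih =>
    have h1 : ((k : ℝ) + ν + 1) ≠ 0 := by positivity
    have h2 : ((k + 1 : ℕ) : ℝ) + ν + 1 = ((k : ℝ) + ν + 1) + 1 := by push_cast; ring
    rw [h2, Real.Gamma_add_one h1]
    have hpos : (0 : ℝ) < Real.Gamma ((k : ℝ) + ν + 1) :=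
      Real.Gamma_pos_of_pos (by positivity)
    have hfac : ((k + 1 : ℕ).factorial : ℝ) = ((k : ℝ) + 1) * (k.factorial : ℝ) := by
      rw [Nat.factorial_succ]; push_cast; ring
    rw [hfac]
    calc ((k : ℝ) + 1) * (k.factorial : ℝ) * Real.Gamma (ν + 1)
        ≤ ((k : ℝ) + 1) * Real.Gamma ((k : ℝ) + ν + 1) := by
          rw [mul_assoc]
          exact mul_le_mul_of_nonneg_left ih (by positivity)
      _ ≤ ((k : ℝ) + ν + 1) * Real.Gamma ((k : ℝ) + ν + 1) := by
          apply mul_le_mul_of_nonneg_right _ hpos.le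
          linarith

lemma gamma_half_le : ∀ j : ℕ,
    Real.Gamma ((j : ℝ) + 1 / 2) ≤ Real.sqrt π * Real.Gamma ((j : ℝ) + 1) := by
  intro j
  induction j with
  | zero =>
    have : ((0:ℕ):ℝ) + 1/2 = 1/2 := by norm_num
    rw [this, Real.Gamma_one_half_eq]
    norm_num [Real.Gamma_one]
  | succ j ih =>
    have h1 : ((j : ℝ) + 1 / 2) ≠ 0 := by positivity
    have h2 : ((j : ℝ) + 1) ≠ 0 := by positivity
    have e1 : ((j + 1 : ℕ) : ℝ) + 1 / 2 = ((j : ℝ) + 1 / 2) + 1 := by push_cast; ring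
    have e2 : ((j + 1 : ℕ) : ℝ) + 1 = ((j : ℝ) + 1) + 1 := by push_cast; ring
    rw [e1, e2, Real.Gamma_add_one h1, Real.Gamma_add_one h2]
    have hg : (0 : ℝ) < Real.Gamma ((j : ℝ) + 1 / 2) :=
      Real.Gamma_pos_of_pos (by positivity)
    calc ((j : ℝ) + 1 / 2) * Real.Gamma ((j : ℝ) + 1 / 2)
        ≤ ((j : ℝ) + 1) * Real.Gamma ((j : ℝ) + 1 / 2) := by
          apply mul_le_mul_of_nonneg_right _ hg.le; linarith
      _ ≤ ((j : ℝ) + 1) * (Real.sqrt π * Real.Gamma ((j : ℝ) + 1)) :=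
          mul_le_mul_of_nonneg_left ih (by positivity)
      _ = Real.sqrt π * (((j : ℝ) + 1) * Real.Gamma ((j : ℝ) + 1)) := by ring

lemma besselI_term_eq (ν κ : ℝ) (hκ : 0 < κ) (k : ℕ) :
    (1 / ((k.factorial : ℝ) * Real.Gamma ((k : ℝ) + ν + 1))) * (κ / 2) ^ (2 * (k : ℝ) + ν)
      = ((κ / 2) ^ 2) ^ k / ((k.factorial : ℝ) * Real.Gamma ((k : ℝ) + ν + 1))
          * (κ / 2) ^ ν := by
  have hx : (0 : ℝ) < κ / 2 := by linarith
  have h1 : (κ / 2) ^ (2 * (k : ℝ) + ν) = (κ / 2) ^ (2 * (k : ℝ)) * (κ / 2) ^ ν :=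
    Real.rpow_add hx _ _
  have h2 : (κ / 2) ^ (2 * (k : ℝ)) = ((κ / 2) ^ 2) ^ k := by
    have : (2 : ℝ) * (k : ℝ) = ((2 * k : ℕ) : ℝ) := by push_cast; ring
    rw [this, Real.rpow_natCast, pow_mul]
  rw [h1, h2]; ring

lemma besselI_nonneg (ν κ : ℝ) (hν : 0 ≤ ν) (hκ : 0 < κ) : 0 ≤ besselI ν κ := by
  apply tsum_nonneg
  intro k
  have hx : (0 : ℝ) < κ / 2 := by linarith
  have hg : (0 : ℝ) < Real.Gamma ((k : ℝ) + ν + 1) := Real.Gamma_pos_of_pos (by positivity)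
  have := Real.rpow_pos_of_pos hx (2 * (k : ℝ) + ν)
  positivity

lemma besselI_le (ν κ : ℝ) (hν : 0 ≤ ν) (hκ : 0 < κ) :
    besselI ν κ ≤ (κ / 2) ^ ν * ((∑' k : ℕ, ((κ / 2) ^ 2) ^ k / (k.factorial : ℝ)) /
      Real.Gamma (ν + 1)) := by
  have hx : (0 : ℝ) < κ / 2 := by linarith
  have hgν : (0 : ℝ) < Real.Gamma (ν + 1) := Real.Gamma_pos_of_pos (by positivity)
  have hsum2 : Summable (fun k : ℕ => ((κ / 2) ^ 2) ^ k / (k.factorial : ℝ) *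
      ((κ / 2) ^ ν / Real.Gamma (ν + 1))) :=
    (Real.summable_pow_div_factorial _).mul_right _
  have hle : ∀ k : ℕ,
      (1 / ((k.factorial : ℝ) * Real.Gamma ((k : ℝ) + ν + 1))) * (κ / 2) ^ (2 * (k : ℝ) + ν)
        ≤ ((κ / 2) ^ 2) ^ k / (k.factorial : ℝ) * ((κ / 2) ^ ν / Real.Gamma (ν + 1)) := by
    intro k
    rw [besselI_term_eq ν κ hκ k]
    have hg : (0 : ℝ) < Real.Gamma ((k : ℝ) + ν + 1) := Real.Gamma_pos_of_pos (by positivity)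
    have hf : (0 : ℝ) < (k.factorial : ℝ) := by exact_mod_cast k.factorial_pos
    have key : (k.factorial : ℝ) * Real.Gamma (ν + 1) ≤ Real.Gamma ((k : ℝ) + ν + 1) := by
      calc (k.factorial : ℝ) * Real.Gamma (ν + 1) ≤ (k.factorial : ℝ) * Real.Gamma (ν + 1) := le_rfl
        _ ≤ Real.Gamma ((k : ℝ) + ν + 1) := gamma_factorial_le ν hν k
    have hrw : ((κ / 2) ^ 2) ^ k / (k.factorial : ℝ) * ((κ / 2) ^ ν / Real.Gamma (ν + 1))
        = ((κ / 2) ^ 2) ^ k / ((k.factorial : ℝ) * Real.Gamma (ν + 1)) * (κ / 2) ^ ν := by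
      ring
    rw [hrw]
    apply mul_le_mul_of_nonneg_right _ (Real.rpow_pos_of_pos hx ν).le
    have hf1 : (1:ℝ) ≤ (k.factorial : ℝ) := by exact_mod_cast k.factorial_pos
    have hden : (k.factorial : ℝ) * Real.Gamma (ν + 1)
        ≤ (k.factorial : ℝ) * Real.Gamma ((k : ℝ) + ν + 1) := by
      apply mul_le_mul_of_nonneg_left _ hf.le
      exact le_trans (le_mul_of_one_le_left hgν.le hf1) key
    exact div_le_div_of_nonneg_left (by positivity) (by positivity) hden
  have hnonneg : ∀ k : ℕ, 0 ≤
      (1 / ((k.factorial : ℝ) * Real.Gamma ((k : ℝ) + ν + 1))) * (κ / 2) ^ (2 * (k : ℝ) + ν) := by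
    intro k
    have hg : (0 : ℝ) < Real.Gamma ((k : ℝ) + ν + 1) := Real.Gamma_pos_of_pos (by positivity)
    have := Real.rpow_pos_of_pos hx (2 * (k : ℝ) + ν)
    positivity
  have hsum1 : Summable (fun k : ℕ =>
      (1 / ((k.factorial : ℝ) * Real.Gamma ((k : ℝ) + ν + 1))) *
        (κ / 2) ^ (2 * (k : ℝ) + ν)) :=
    Summable.of_nonneg_of_le hnonneg hle hsum2
  calc besselI ν κ ≤ ∑' k : ℕ, ((κ / 2) ^ 2) ^ k / (k.factorial : ℝ) *
        ((κ / 2) ^ ν / Real.Gamma (ν + 1)) := Summable.tsum_le_tsum hle hsum1 hsum2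
    _ = (∑' k : ℕ, ((κ / 2) ^ 2) ^ k / (k.factorial : ℝ)) *
        ((κ / 2) ^ ν / Real.Gamma (ν + 1)) := tsum_mul_right
    _ = (κ / 2) ^ ν * ((∑' k : ℕ, ((κ / 2) ^ 2) ^ k / (k.factorial : ℝ)) /
        Real.Gamma (ν + 1)) := by ring

/-- The series defining the Kent normalizing constant converges. -/
theorem kent_normalizing_series_summable (κ β : ℝ) (hκ : 0 < κ) :
    Summable (fun j : ℕ => (Real.Gamma ((j : ℝ) + 1 / 2) / Real.Gamma ((j : ℝ) + 1)) *
      β ^ (2 * j) * (κ / 2) ^ (-(2 * (j : ℝ)) - 1 / 2) *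
      besselI (2 * (j : ℝ) + 1 / 2) κ) := by
  have hx : (0 : ℝ) < κ / 2 := by linarith
  set E : ℝ := ∑' k : ℕ, ((κ / 2) ^ 2) ^ k / (k.factorial : ℝ) with hE
  have hE0 : 0 ≤ E := tsum_nonneg fun k => by positivity
  have hg32 : (0 : ℝ) < Real.Gamma (3 / 2) := Real.Gamma_pos_of_pos (by norm_num)
  -- the comparison series
  have hsumg : Summable (fun j : ℕ =>
      Real.sqrt π * E / Real.Gamma (3 / 2) * ((β ^ 2) ^ j / ((2 * j).factorial : ℝ))) := by
    apply Summable.mul_left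
    apply Summable.of_nonneg_of_le (fun j => by
      have h1 : (0:ℝ) < ((2*j).factorial : ℝ) := by exact_mod_cast (2*j).factorial_pos
      positivity)
      (fun j => ?_) (Real.summable_pow_div_factorial (β ^ 2))
    apply div_le_div_of_nonneg_left (by positivity) (by exact_mod_cast j.factorial_pos)
    exact_mod_cast Nat.factorial_le (by omega : j ≤ 2 * j)
  apply Summable.of_nonneg_of_le _ _ hsumg
  · intro j
    have hgj : (0 : ℝ) < Real.Gamma ((j : ℝ) + 1 / 2) := Real.Gamma_pos_of_pos (by positivity)
    have hgj1 : (0 : ℝ) < Real.Gamma ((j : ℝ) + 1) := Real.Gamma_pos_of_pos (by positivity)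
    have hr := Real.rpow_pos_of_pos hx (-(2 * (j : ℝ)) - 1 / 2)
    have hb := besselI_nonneg (2 * (j : ℝ) + 1 / 2) κ (by positivity) hκ
    have hβnn : (0:ℝ) ≤ β ^ (2*j) := by
      rw [show β ^ (2*j) = (β^2)^j by rw [← pow_mul, mul_comm]]; positivity
    exact mul_nonneg (mul_nonneg (mul_nonneg (div_nonneg hgj.le hgj1.le) hβnn) hr.le) hb
  · intro j
    have hgj : (0 : ℝ) < Real.Gamma ((j : ℝ) + 1 / 2) := Real.Gamma_pos_of_pos (by positivity)
    have hgj1 : (0 : ℝ) < Real.Gamma ((j : ℝ) + 1) := Real.Gamma_pos_of_pos (by positivity)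
    have hg2j : (0 : ℝ) < Real.Gamma (2 * (j : ℝ) + 1 / 2 + 1) :=
      Real.Gamma_pos_of_pos (by positivity)
    have hr := Real.rpow_pos_of_pos hx (-(2 * (j : ℝ)) - 1 / 2)
    -- bound besselI
    have hbI := besselI_le (2 * (j : ℝ) + 1 / 2) κ (by positivity) hκ
    have hcancel : (κ / 2) ^ (-(2 * (j : ℝ)) - 1 / 2) * (κ / 2) ^ (2 * (j : ℝ) + 1 / 2)
        = 1 := by
      rw [← Real.rpow_add hx]
      norm_num
    have hβ : β ^ (2 * j) = (β ^ 2) ^ j := by rw [← pow_mul, mul_comm]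
    have hβnn : (0:ℝ) ≤ β ^ (2*j) := by rw [hβ]; positivity
    -- Gamma(2j + 3/2) ≥ (2j)! * Gamma(3/2)
    have hgam : ((2 * j).factorial : ℝ) * Real.Gamma (3 / 2)
        ≤ Real.Gamma (2 * (j : ℝ) + 1 / 2 + 1) := by
      have := gamma_factorial_le (1 / 2) (by norm_num) (2 * j)
      have hc : ((2 * j : ℕ) : ℝ) + 1 / 2 + 1 = 2 * (j : ℝ) + 1 / 2 + 1 := by push_cast; ring
      rw [hc] at this
      have hc2 : (1 : ℝ) / 2 + 1 = 3 / 2 := by norm_num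
      rwa [hc2] at this
    have hhalf : Real.Gamma ((j : ℝ) + 1 / 2) ≤ Real.sqrt π * Real.Gamma ((j : ℝ) + 1) :=
      gamma_half_le j
    calc (Real.Gamma ((j : ℝ) + 1 / 2) / Real.Gamma ((j : ℝ) + 1)) *
          β ^ (2 * j) * (κ / 2) ^ (-(2 * (j : ℝ)) - 1 / 2) *
          besselI (2 * (j : ℝ) + 1 / 2) κ
        ≤ (Real.Gamma ((j : ℝ) + 1 / 2) / Real.Gamma ((j : ℝ) + 1)) *
          β ^ (2 * j) * (κ / 2) ^ (-(2 * (j : ℝ)) - 1 / 2) *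
          ((κ / 2) ^ (2 * (j : ℝ) + 1 / 2) * (E / Real.Gamma (2 * (j : ℝ) + 1 / 2 + 1))) := by
          apply mul_le_mul_of_nonneg_left hbI
          exact mul_nonneg (mul_nonneg (div_nonneg hgj.le hgj1.le) hβnn) hr.le
      _ = (Real.Gamma ((j : ℝ) + 1 / 2) / Real.Gamma ((j : ℝ) + 1)) * β ^ (2 * j) *
          ((κ / 2) ^ (-(2 * (j : ℝ)) - 1 / 2) * (κ / 2) ^ (2 * (j : ℝ) + 1 / 2)) *
          (E / Real.Gamma (2 * (j : ℝ) + 1 / 2 + 1)) := by ring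
      _ = (Real.Gamma ((j : ℝ) + 1 / 2) / Real.Gamma ((j : ℝ) + 1)) * β ^ (2 * j) *
          (E / Real.Gamma (2 * (j : ℝ) + 1 / 2 + 1)) := by rw [hcancel, mul_one]
      _ ≤ Real.sqrt π * β ^ (2 * j) *
          (E / (((2 * j).factorial : ℝ) * Real.Gamma (3 / 2))) := by
          have hf2j : (0:ℝ) < ((2*j).factorial : ℝ) := by exact_mod_cast (2*j).factorial_pos
          apply mul_le_mul
          · apply mul_le_mul_of_nonneg_right _ hβnn
            rw [div_le_iff₀ hgj1]
            exact hhalf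
          · exact div_le_div_of_nonneg_left hE0 (by positivity) hgam
          · exact div_nonneg hE0 hg2j.le
          · exact mul_nonneg (Real.sqrt_nonneg _) hβnn
      _ = Real.sqrt π * E / Real.Gamma (3 / 2) * ((β ^ 2) ^ j / ((2 * j).factorial : ℝ)) := by
          rw [hβ]
          field_simp
end

section
/- Fix u, v ∈ ℝ and d ∈ [0, 1/2). For κ > u² + v², let x(κ) = (u/√κ, v/√κ, √(1 − (u² + v²)/κ)) (a point on the unit sphere) and let β = d·κ. Then the centred Kent log-density exponent converges to the bivariate normal exponent: lim_{κ → ∞} [ κ·x₃(κ) + β·(x₁(κ)² − x₂(κ)²) − κ ] = −(1/2)·(1 − 2d)·u² − (1/2)·(1 + 2d)·v². -/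
open Real Filter Topology

/-!
Rationalising, `κ √(1 - s/κ) - κ = -s / (√(1 - s/κ) + 1)`, whose limit is `-s/2`; and the
anisotropic term `β (x₁² - x₂²)` with `β = dκ` is identically `d (u² - v²)`.
-/

lemma mul_sqrt_one_sub_div_sub_self {s κ : ℝ} (hκ : 0 < κ) (hsκ : s ≤ κ) :
    κ * √(1 - s / κ) - κ = -s / (√(1 - s / κ) + 1) := by
  have hrad : 0 ≤ 1 - s / κ := by rw [sub_nonneg, div_le_one hκ]; exact hsκ
  rw [eq_div_iff (by positivity)]
  linear_combination κ * Real.sq_sqrt hrad - mul_div_cancel₀ s hκ.ne'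

lemma tendsto_mul_sqrt_one_sub_div_sub_self (s : ℝ) :
    Tendsto (fun κ : ℝ => κ * √(1 - s / κ) - κ) atTop (𝓝 (-s / 2)) := by
  have hsqrt : Tendsto (fun κ : ℝ => √(1 - s / κ) + 1) atTop (𝓝 2) := by
    have h := ((tendsto_const_nhds (x := s)).div_atTop tendsto_id).const_sub 1
    simpa [one_add_one_eq_two] using (h.sqrt.add_const 1)
  refine ((tendsto_const_nhds (x := -s)).div hsqrt two_ne_zero).congr' ?_
  filter_upwards [eventually_gt_atTop 0, eventually_ge_atTop s] with κ hκ hsκ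
  exact (mul_sqrt_one_sub_div_sub_self hκ hsκ).symm

lemma mul_div_sqrt_sq {κ : ℝ} (hκ : 0 < κ) (c u : ℝ) : c * κ * (u / √κ) ^ 2 = c * u ^ 2 := by
  rw [div_pow, Real.sq_sqrt hκ.le]
  field_simp

theorem kent_high_concentration_limit_general (u v d : ℝ) :
    Tendsto
      (fun κ : ℝ =>
        κ * Real.sqrt (1 - (u ^ 2 + v ^ 2) / κ) +
          (d * κ) * ((u / Real.sqrt κ) ^ 2 - (v / Real.sqrt κ) ^ 2) - κ)
      atTop
      (nhds (-(1 / 2) * (1 - 2 * d) * u ^ 2 - (1 / 2) * (1 + 2 * d) * v ^ 2)) := by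
  have hlim := (tendsto_mul_sqrt_one_sub_div_sub_self (u ^ 2 + v ^ 2)).add_const
    (d * (u ^ 2 - v ^ 2))
  rw [show -(u ^ 2 + v ^ 2) / 2 + d * (u ^ 2 - v ^ 2)
      = -(1 / 2) * (1 - 2 * d) * u ^ 2 - (1 / 2) * (1 + 2 * d) * v ^ 2 by ring] at hlim
  refine hlim.congr' ?_
  filter_upwards [eventually_gt_atTop 0] with κ hκ
  rw [mul_sub (d * κ), mul_div_sqrt_sq hκ, mul_div_sqrt_sq hκ]
  ring

/-- High-concentration bivariate normal approximation to the Kent distribution: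
along the scaled coordinates `x(κ) = (u/√κ, v/√κ, √(1 − (u²+v²)/κ))` with `β = d·κ`,
the centred Kent log-density exponent `κ·x₃ + β·(x₁² − x₂²) − κ` converges, as
`κ → ∞`, to the bivariate normal exponent
`−(1/2)(1 − 2d)u² − (1/2)(1 + 2d)v²`. -/
theorem kent_high_concentration_limit (u v d : ℝ) (hd0 : 0 ≤ d) (hd : d < 1 / 2) :
    Tendsto
      (fun κ : ℝ =>
        κ * Real.sqrt (1 - (u ^ 2 + v ^ 2) / κ) +
          (d * κ) * ((u / Real.sqrt κ) ^ 2 - (v / Real.sqrt κ) ^ 2) - κ)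
      atTop
      (nhds (-(1 / 2) * (1 - 2 * d) * u ^ 2 - (1 / 2) * (1 + 2 * d) * v ^ 2)) :=
  kent_high_concentration_limit_general u v d
end

section
/- Existence of the approximate-MLE orientation matrix: for every nonzero vector x̄ ∈ ℝ³ and every symmetric real 3×3 matrix S, there exists Γ ∈ SO(3) such that Γᵀx̄ = (0, 0, ‖x̄‖)ᵀ (i.e., Γᵀx̄ is proportional to (0,0,1)ᵀ with positive constant) and the (1,2) entry of ΓᵀSΓ is zero. -/
open Real Matrix

noncomputable def rotG (ca sa cb sb ct st : ℝ) : Matrix (Fin 3) (Fin 3) ℝ :=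
  !![ca*cb*ct - sa*st, -(ca*cb*st) - sa*ct, ca*sb;
     sa*cb*ct + ca*st, -(sa*cb*st) + ca*ct, sa*sb;
     -(sb*ct), sb*st, cb]

lemma rotG_T (ca sa cb sb ct st : ℝ) :
    (rotG ca sa cb sb ct st)ᵀ =
    !![ca*cb*ct - sa*st, sa*cb*ct + ca*st, -(sb*ct);
       -(ca*cb*st) - sa*ct, -(sa*cb*st) + ca*ct, sb*st;
       ca*sb, sa*sb, cb] := by
  ext i j
  fin_cases i <;> fin_cases j <;> rfl

lemma rotG_orth (ca sa cb sb ct st : ℝ) (h1 : ca^2 + sa^2 = 1)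
    (h2 : cb^2 + sb^2 = 1) (h3 : ct^2 + st^2 = 1) :
    (rotG ca sa cb sb ct st)ᵀ * rotG ca sa cb sb ct st = 1 := by
  rw [rotG_T]
  ext i j
  fin_cases i <;> fin_cases j <;>
    simp [rotG, Matrix.mul_apply, Fin.sum_univ_three, Matrix.one_apply]
  · linear_combination (cb^2*ct^2 + st^2)*h1 + ct^2*h2 + h3
  · linear_combination (ct*st - cb^2*ct*st)*h1 - ct*st*h2
  · linear_combination (cb*sb*ct)*h1
  · linear_combination (ct*st - cb^2*ct*st)*h1 - ct*st*h2
  · linear_combination (cb^2*st^2 + ct^2)*h1 + st^2*h2 + h3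
  · linear_combination (-(cb*sb*st))*h1
  · linear_combination (cb*sb*ct)*h1
  · linear_combination (-(cb*sb*st))*h1
  · linear_combination sb^2*h1 + h2

lemma rotG_det (ca sa cb sb ct st : ℝ) (h1 : ca^2 + sa^2 = 1)
    (h2 : cb^2 + sb^2 = 1) (h3 : ct^2 + st^2 = 1) :
    (rotG ca sa cb sb ct st).det = 1 := by
  simp [rotG, Matrix.det_fin_three]
  linear_combination ((cb^2+sb^2)*(ct^2+st^2))*h1 + (ct^2+st^2)*h2 + h3

lemma rotG_conj (ca sa cb sb ct st : ℝ) (S : Matrix (Fin 3) (Fin 3) ℝ) :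
    ((rotG ca sa cb sb ct st)ᵀ * S * rotG ca sa cb sb ct st) 0 1 =
    -(ct*st) * (((rotG ca sa cb sb 1 0)ᵀ * S * rotG ca sa cb sb 1 0) 0 0)
    + ct^2 * (((rotG ca sa cb sb 1 0)ᵀ * S * rotG ca sa cb sb 1 0) 0 1)
    - st^2 * (((rotG ca sa cb sb 1 0)ᵀ * S * rotG ca sa cb sb 1 0) 1 0)
    + st*ct * (((rotG ca sa cb sb 1 0)ᵀ * S * rotG ca sa cb sb 1 0) 1 1) := by
  simp only [rotG_T]
  simp [rotG, Matrix.mul_apply, Matrix.vecMul, dotProduct, Fin.sum_univ_three]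
  ring


/-- Existence of the approximate-MLE orientation matrix: for every nonzero sample mean
vector `x̄ ∈ ℝ³` and every symmetric sample second-moment matrix `S`, there is
`Γ ∈ SO(3)` with `Γᵀx̄ = (0, 0, ‖x̄‖)ᵀ` and `(ΓᵀSΓ)₁₂ = 0`. -/
theorem approximate_mle_orientation_exists (xbar : Fin 3 → ℝ) (hx : xbar ≠ 0)
    (S : Matrix (Fin 3) (Fin 3) ℝ) (hS : Sᵀ = S) :
    ∃ Γ : Matrix (Fin 3) (Fin 3) ℝ, Γᵀ * Γ = 1 ∧ Γ.det = 1 ∧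
      Γᵀ.mulVec xbar = ![0, 0, Real.sqrt (∑ i, xbar i ^ 2)] ∧
      (Γᵀ * S * Γ) 0 1 = 0 := by
  have hsum : ∑ i, xbar i ^ 2 = xbar 0 ^ 2 + xbar 1 ^ 2 + xbar 2 ^ 2 := by
    simp [Fin.sum_univ_three]
  have hsumpos : 0 < ∑ i, xbar i ^ 2 := by
    obtain ⟨i, hi⟩ := Function.ne_iff.mp hx
    exact Finset.sum_pos' (fun j _ => sq_nonneg _)
      ⟨i, Finset.mem_univ i, (sq_nonneg (xbar i)).lt_of_ne ((pow_ne_zero 2 hi).symm)⟩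
  set r := Real.sqrt (∑ i, xbar i ^ 2) with hrdef
  have hrpos : 0 < r := Real.sqrt_pos.mpr hsumpos
  have hr2 : r ^ 2 = xbar 0 ^ 2 + xbar 1 ^ 2 + xbar 2 ^ 2 := by
    rw [← hsum, hrdef, Real.sq_sqrt hsumpos.le]
  set ρ := Real.sqrt (xbar 0 ^ 2 + xbar 1 ^ 2) with hρdef
  have hρ2 : ρ ^ 2 = xbar 0 ^ 2 + xbar 1 ^ 2 := Real.sq_sqrt (by positivity)
  obtain ⟨ca, sa, h1, hca, hsa⟩ :
      ∃ ca sa : ℝ, ca ^ 2 + sa ^ 2 = 1 ∧ ca * ρ = xbar 0 ∧ sa * ρ = xbar 1 := by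
    by_cases h : ρ = 0
    · have h0 : xbar 0 = 0 ∧ xbar 1 = 0 := by
        rw [h] at hρ2
        constructor <;> nlinarith [sq_nonneg (xbar 0), sq_nonneg (xbar 1)]
      exact ⟨1, 0, by ring, by simp [h, h0.1], by simp [h, h0.2]⟩
    · refine ⟨xbar 0 / ρ, xbar 1 / ρ, ?_, by field_simp, by field_simp⟩
      field_simp
      linear_combination -hρ2
  have hcb2 : (xbar 2 / r) ^ 2 + (ρ / r) ^ 2 = 1 := by
    field_simp
    linear_combination hρ2 - hr2
  set cb := xbar 2 / r with hcbdef
  set sb := ρ / r with hsbdef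
  have h2 : cb ^ 2 + sb ^ 2 = 1 := hcb2
  have hr0 : r ≠ 0 := hrpos.ne'
  have hcb : cb * r = xbar 2 := by rw [hcbdef]; field_simp
  have hsb : sb * r = ρ := by rw [hsbdef]; field_simp
  set A := (rotG ca sa cb sb 1 0)ᵀ * S * rotG ca sa cb sb 1 0 with hAdef
  have hAsymm : A 1 0 = A 0 1 := by
    have : Aᵀ = A := by
      rw [hAdef, Matrix.transpose_mul, Matrix.transpose_mul, Matrix.transpose_transpose,
        hS, Matrix.mul_assoc]
    conv_lhs => rw [← this]
    rfl
  set g : ℝ → ℝ := fun θ =>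
    -(Real.cos θ * Real.sin θ) * A 0 0 + (Real.cos θ) ^ 2 * A 0 1
      - (Real.sin θ) ^ 2 * A 1 0 + Real.sin θ * Real.cos θ * A 1 1 with hgdef
  have hgc : Continuous g := by fun_prop
  have hg0 : g 0 = A 0 1 := by rw [hgdef]; norm_num
  have hgpi : g (Real.pi / 2) = -(A 0 1) := by
    rw [hgdef]
    simp [hAsymm]
  have h0mem : (0 : ℝ) ∈ Set.uIcc (g 0) (g (Real.pi / 2)) := by
    rw [hg0, hgpi, Set.mem_uIcc]
    rcases le_total (A 0 1) 0 with h | h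
    · left; constructor <;> linarith
    · right; constructor <;> linarith
  obtain ⟨θ, -, hθ⟩ := intermediate_value_uIcc hgc.continuousOn h0mem
  set ct := Real.cos θ with hctdef
  set st := Real.sin θ with hstdef
  have h3 : ct ^ 2 + st ^ 2 = 1 := by
    rw [hctdef, hstdef]; exact Real.cos_sq_add_sin_sq θ
  refine ⟨rotG ca sa cb sb ct st, rotG_orth ca sa cb sb ct st h1 h2 h3,
    rotG_det ca sa cb sb ct st h1 h2 h3, ?_, ?_⟩
  · have hv : (rotG ca sa cb sb ct st).mulVec ![0, 0, r] = xbar := by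
      ext i
      fin_cases i <;>
        simp [rotG, Matrix.mulVec, dotProduct, Fin.sum_univ_three]
      · linear_combination ca * hsb + hca
      · linear_combination sa * hsb + hsa
      · linear_combination hcb
    rw [← hv, Matrix.mulVec_mulVec, rotG_orth ca sa cb sb ct st h1 h2 h3,
      Matrix.one_mulVec]
  · rw [rotG_conj, ← hAdef]
    linear_combination hθ
end
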